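/- Consider the ground program IN defined in the context. Then IN is complete w.r.t. S = S_m ∪ S_in, where S_m = { m(tᵢ, u) | u is the list term representing [t₁,…,tₙ] and 1 ≤ i ≤ n } and S_in = { in(u, t) | u and t are list terms representing [u₁,…,u_m] and [t₁,…,tₙ] respectively, and every uⱼ occurs among t₁,…,tₙ }; that is, S is contained in the least Herbrand model of IN. -/
import Mathlib


/-- The immediate consequence operator of a ground program `P`. -/
def TP {α : Type*} (P : Set (List α × α)) : Set α →o Set α :=
  ⟨fun I => {H | ∃ B : List α, (B, H) ∈ P ∧ ∀ A ∈ B, A ∈ I},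
   by
     intro I J h H hH
     obtain ⟨B, hB, hall⟩ := hH
     exact ⟨B, hB, fun A hA => h (hall A hA)⟩⟩

/-- The least Herbrand model of a ground program: the least fixed point of `TP P`. -/
def MP {α : Type*} (P : Set (List α × α)) : Set α := OrderHom.lfp (TP P)

/-- The Herbrand universe: terms built from `nil`, `cons` and a constant `c`. -/
inductive Term : Type
  | nil : Term
  | cons : Term → Term → Term
  | c : Term

/-- Ground atoms: two binary predicates `m` and `in` over `Term`. -/
abbrev Atom : Type := (Term × Term) ⊕ (Term × Term)

/-- The atom `m(t, u)`. -/
def mA (t u : Term) : Atom := Sum.inl (t, u)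
/-- The atom `in(t, u)`. -/
def inA (t u : Term) : Atom := Sum.inr (t, u)

/-- The program IN: all ground instances of
`in(nil, L)`, `in(cons H T, L) ← m(H, L), in(T, L)`,
`m(E, cons E L)`, `m(E, cons H L) ← m(E, L)`. -/
def IN : Set (List Atom × Atom) :=
  {C | ∃ L : Term, C = ([], inA Term.nil L)} ∪
    {C | ∃ H T L : Term, C = ([mA H L, inA T L], inA (Term.cons H T) L)} ∪
    {C | ∃ E L : Term, C = ([], mA E (Term.cons E L))} ∪
    {C | ∃ E H L : Term, C = ([mA E L], mA E (Term.cons H L))}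

/-- `t` is a list term. -/
def IsList : Term → Prop
  | Term.nil => True
  | Term.cons _ t => IsList t
  | Term.c => False

/-- `t` is an element of the list represented by `u`. -/
def Mem : Term → Term → Prop
  | t, Term.cons h l => t = h ∨ Mem t l
  | _, _ => False


lemma step_mem {a : Atom} (h : a ∈ TP IN (MP IN)) : a ∈ MP IN := by
  rw [MP, ← OrderHom.map_lfp (TP IN)]; exact h

lemma mA_mem : ∀ u t : Term, Mem t u → mA t u ∈ MP IN := by
  intro u
  induction u with
  | nil => intro t h; cases h
  | c => intro t h; cases h
  | cons h l _ ih =>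
    intro t hm
    cases hm with
    | inl he =>
      subst he
      exact step_mem ⟨[], Or.inl (Or.inr ⟨t, l, rfl⟩), by simp⟩
    | inr hm =>
      exact step_mem ⟨[mA t l], Or.inr ⟨t, h, l, rfl⟩, by simpa using ih t hm⟩

lemma inA_mem : ∀ u t : Term, IsList u → (∀ x : Term, Mem x u → Mem x t) →
    inA u t ∈ MP IN := by
  intro u
  induction u with
  | nil =>
    intro t _ _
    exact step_mem ⟨[], Or.inl (Or.inl (Or.inl ⟨t, rfl⟩)), by simp⟩
  | c => intro t h; cases h
  | cons h l _ ih =>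
    intro t hl hsub
    refine step_mem ⟨[mA h t, inA l t], Or.inl (Or.inl (Or.inr ⟨h, l, t, rfl⟩)), ?_⟩
    intro A hA
    simp only [List.mem_cons, List.not_mem_nil, or_false] at hA
    rcases hA with rfl | rfl
    · exact mA_mem t h (hsub h (Or.inl rfl))
    · exact ih t hl fun x hx => hsub x (Or.inr hx)

theorem in_complete :
    {a : Atom | ∃ t u : Term, a = mA t u ∧ IsList u ∧ Mem t u} ∪
        {a : Atom | ∃ u t : Term,
          a = inA u t ∧ IsList u ∧ IsList t ∧ ∀ x : Term, Mem x u → Mem x t}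
      ⊆ MP IN := by
  rintro a (⟨t, u, rfl, _, hm⟩ | ⟨u, t, rfl, hu, _, hsub⟩)
  · exact mA_mem u t hm
  · exact inA_mem u t hu hsub
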